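/- The function R(t) = R_1(t) - \frac{1}{8\sqrt{t}+t\sqrt{t}}I_{[t>1]} is integrable on (0,\infty), where R_1(t) \sim \frac{1}{2t^{3/2}} at infinity and R_1(t) extends continuously to t=0. -/

import Mathlib

noncomputable def R1 (t : ℝ) : ℝ :=
  Real.sqrt ((4 * t - 15) * Real.exp (4 * t) + (24 * t + 32) * Real.exp (3 * t)
      - (8 * t ^ 3 + 12 * t ^ 2 + 36 * t + 18) * Real.exp (2 * t)
      + 8 * t * Real.exp t + 1) /
    (2 * t * (2 * t * Real.exp (2 * t) - 3 * Real.exp (2 * t) + 4 * Real.exp t - 1))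

/-!
Both terms of the difference are integrable on `(0, ∞)` separately. The denominator of `R1` is
`2t e^{2t} h(t)` with `h(t) = 2t - 3 + 4e^{-t} - e^{-2t}` (`R1den` below), and
`h' = 2(1 - e^{-t})² > 0`, so `R1` is continuous on `(0, ∞)`. Degree-7 Taylor expansions of the
exponentials show that for `t ≤ 1/4` the radicand is at most `64 t⁷` and `h(t) ≥ t³/3`, whence
`R1 t ≤ 12 / √t`; for `t ≥ 3` the radicand is at most `49 t e^{4t}` and `h(t) ≥ t`, whence
`R1 t ≤ 4 / t^{3/2}`. The subtracted term is at most `t^{-3/2}`.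
-/

open Real Set MeasureTheory

lemma MeasureTheory.IntegrableOn.of_continuousOn_of_abs_le {α : Type*} [TopologicalSpace α]
    [MeasurableSpace α] [OpensMeasurableSpace α] {μ : Measure α} {f g : α → ℝ} {s : Set α}
    (hs : MeasurableSet s) (hg : IntegrableOn g s μ) (hf : ContinuousOn f s)
    (hfg : ∀ x ∈ s, |f x| ≤ g x) :
    IntegrableOn f s μ :=
  hg.mono' (hf.aestronglyMeasurable hs) (ae_restrict_of_forall_mem hs hfg)

lemma rpow_neg_one_half_eq {t : ℝ} (ht : 0 ≤ t) : t ^ (-(1 / 2) : ℝ) = 1 / √t := by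
  rw [rpow_neg ht, ← sqrt_eq_rpow, one_div]

lemma rpow_neg_three_halves_eq {t : ℝ} (ht : 0 < t) : t ^ (-(3 / 2) : ℝ) = 1 / (t * √t) := by
  rw [rpow_neg ht.le, one_div, show (3 / 2 : ℝ) = 1 + 1 / 2 by norm_num, rpow_add ht, rpow_one,
    ← sqrt_eq_rpow]

noncomputable def expTaylor7 (x : ℝ) : ℝ :=
  1 + x + x ^ 2 / 2 + x ^ 3 / 6 + x ^ 4 / 24 + x ^ 5 / 120 + x ^ 6 / 720 + x ^ 7 / 5040

lemma abs_exp_sub_expTaylor7_le {x : ℝ} (hx : |x| ≤ 1) :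
    |exp x - expTaylor7 x| ≤ x ^ 8 / 35840 := by
  have h := Real.exp_bound hx (n := 8) (by norm_num)
  rw [Even.pow_abs ⟨4, rfl⟩] at h
  norm_num [Finset.sum_range_succ, Nat.factorial] at h
  simpa [expTaylor7, add_assoc, div_eq_mul_inv] using h

noncomputable def R1rad (t : ℝ) : ℝ :=
  (4 * t - 15) * exp (4 * t) + (24 * t + 32) * exp (3 * t)
    - (8 * t ^ 3 + 12 * t ^ 2 + 36 * t + 18) * exp (2 * t) + 8 * t * exp t + 1

noncomputable def R1den (t : ℝ) : ℝ := 2 * t - 3 + 4 * exp (-t) - exp (-(2 * t))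

lemma R1_eq (t : ℝ) : R1 t = √(R1rad t) / (2 * t * (exp (2 * t) * R1den t)) := by
  have e1 : exp (2 * t) * exp (-t) = exp t := by rw [← exp_add]; ring_nf
  have e2 : exp (2 * t) * exp (-(2 * t)) = 1 := by rw [← exp_add]; simp
  rw [R1, R1rad, R1den]
  congr 2
  linear_combination (-4) * e1 + e2

lemma hasDerivAt_R1den (t : ℝ) : HasDerivAt R1den (2 * (1 - exp (-t)) ^ 2) t := by
  have e : exp (-(2 * t)) = exp (-t) ^ 2 := by rw [← exp_nat_mul]; ring_nf
  refine (((((hasDerivAt_id' t).const_mul 2).sub_const 3).fun_add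
    ((hasDerivAt_neg' t).exp.const_mul 4)).fun_sub
    ((hasDerivAt_id' t).const_mul 2).fun_neg.exp).congr_deriv ?_
  rw [e]
  ring

lemma R1den_pos {t : ℝ} (ht : 0 < t) : 0 < R1den t := by
  have mono : StrictMonoOn R1den (Ici 0) := by
    refine strictMonoOn_of_deriv_pos (convex_Ici 0)
      (fun x _ ↦ (hasDerivAt_R1den x).continuousAt.continuousWithinAt) fun x hx ↦ ?_
    rw [interior_Ici] at hx
    rw [(hasDerivAt_R1den x).deriv]
    have : exp (-x) < 1 := exp_lt_one_iff.2 (by linarith [hx.out])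
    nlinarith
  have := mono self_mem_Ici ht.le ht
  norm_num [R1den] at this ⊢
  linarith

lemma continuousOn_R1 : ContinuousOn R1 (Ioi 0) := by
  have hrad : Continuous R1rad := by unfold R1rad; fun_prop
  have hden : Continuous R1den := by unfold R1den; fun_prop
  rw [show R1 = _ from funext R1_eq]
  refine ContinuousOn.div (by fun_prop) (by fun_prop) fun t (ht : 0 < t) ↦ ?_
  have := R1den_pos ht
  positivity

lemma R1_nonneg {t : ℝ} (ht : 0 < t) : 0 ≤ R1 t := by
  have := R1den_pos ht
  rw [R1_eq]
  positivity

lemma cube_div_three_le_R1den {t : ℝ} (ht : 0 < t) (ht4 : t ≤ 1 / 4) : t ^ 3 / 3 ≤ R1den t := by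
  have b1 := (abs_le.1 (abs_exp_sub_expTaylor7_le (x := -t)
    (by rw [abs_of_nonpos (by linarith)]; linarith))).1
  have b2 := (abs_le.1 (abs_exp_sub_expTaylor7_le (x := -(2 * t))
    (by rw [abs_of_nonpos (by linarith)]; linarith))).2
  have hp (n : ℕ) : t ^ n * t ^ 3 ≤ (1 / 4) ^ n * t ^ 3 :=
    mul_le_mul_of_nonneg_right (pow_le_pow_left₀ ht.le ht4 n) (by positivity)
  simp only [expTaylor7] at b1 b2
  unfold R1den
  nlinarith [pow_pos ht 3, hp 1, hp 2, hp 3, hp 4, hp 5]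

lemma R1rad_le_mul_pow_seven {t : ℝ} (ht : 0 < t) (ht4 : t ≤ 1 / 4) : R1rad t ≤ 64 * t ^ 7 := by
  have b (c : ℝ) (hc : 0 ≤ c) (hc4 : c ≤ 4) := abs_le.1 (abs_exp_sub_expTaylor7_le (x := c * t)
    (by rw [abs_of_nonneg (by positivity)]; nlinarith))
  have t4 : (4 * t - 15) * exp (4 * t) ≤
      (4 * t - 15) * (expTaylor7 (4 * t) - (4 * t) ^ 8 / 35840) :=
    mul_le_mul_of_nonpos_left (by linarith [(b 4 (by norm_num) le_rfl).1]) (by linarith)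
  have t3 : (24 * t + 32) * exp (3 * t) ≤
      (24 * t + 32) * (expTaylor7 (3 * t) + (3 * t) ^ 8 / 35840) :=
    mul_le_mul_of_nonneg_left (by linarith [(b 3 (by norm_num) (by norm_num)).2]) (by linarith)
  have t2 : -(8 * t ^ 3 + 12 * t ^ 2 + 36 * t + 18) * exp (2 * t) ≤
      -(8 * t ^ 3 + 12 * t ^ 2 + 36 * t + 18) *
        (expTaylor7 (2 * t) - (2 * t) ^ 8 / 35840) :=
    mul_le_mul_of_nonpos_left (by linarith [(b 2 (by norm_num) (by norm_num)).1])
      (by nlinarith)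
  have t1 : 8 * t * exp t ≤ 8 * t * (expTaylor7 t + t ^ 8 / 35840) :=
    mul_le_mul_of_nonneg_left (by linarith [by simpa using (b 1 (by norm_num) (by norm_num)).2])
      (by linarith)
  have p8 : t ^ 8 ≤ (1 / 4) * t ^ 7 := by
    nlinarith [mul_le_mul_of_nonneg_right ht4 (pow_nonneg ht.le 7)]
  have p11 : t ^ 11 ≤ (1 / 256) * t ^ 7 := by
    nlinarith [mul_le_mul_of_nonneg_right (pow_le_pow_left₀ ht.le ht4 4) (pow_nonneg ht.le 7)]
  simp only [expTaylor7] at t4 t3 t2 t1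
  unfold R1rad
  nlinarith [pow_nonneg ht.le 7, pow_nonneg ht.le 9, pow_nonneg ht.le 10]

lemma R1_le_twelve_div_sqrt {t : ℝ} (ht : 0 < t) (ht4 : t ≤ 1 / 4) : R1 t ≤ 12 / √t := by
  have hnum : √(R1rad t) ≤ 8 * t ^ 3 * √t := calc
    √(R1rad t) ≤ √((8 * t ^ 3) ^ 2 * t) :=
      sqrt_le_sqrt (by nlinarith [R1rad_le_mul_pow_seven ht ht4])
    _ = 8 * t ^ 3 * √t := by rw [sqrt_mul (by positivity), sqrt_sq (by positivity)]
  have hden : 2 / 3 * t ^ 4 ≤ 2 * t * (exp (2 * t) * R1den t) := calc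
    2 / 3 * t ^ 4 = 2 * t * (1 * (t ^ 3 / 3)) := by ring
    _ ≤ 2 * t * (exp (2 * t) * R1den t) := by
      gcongr
      · exact one_le_exp (by positivity)
      · exact cube_div_three_le_R1den ht ht4
  have hs := sq_sqrt ht.le
  rw [R1_eq]
  calc √(R1rad t) / (2 * t * (exp (2 * t) * R1den t))
      ≤ 8 * t ^ 3 * √t / (2 / 3 * t ^ 4) := div_le_div₀ (by positivity) hnum (by positivity) hden
    _ = 12 / √t := by
      field_simp
      linear_combination 24 * hs

lemma R1rad_le_sq_mul {t : ℝ} (ht : 3 ≤ t) : R1rad t ≤ (7 * exp (2 * t)) ^ 2 * t := by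
  have e3 : exp (3 * t) ≤ exp (4 * t) := exp_le_exp.2 (by linarith)
  have e1 : exp t ≤ exp (4 * t) := exp_le_exp.2 (by linarith)
  have e0 : 1 ≤ exp (4 * t) := one_le_exp (by linarith)
  have e22 : exp (4 * t) = exp (2 * t) ^ 2 := by rw [← exp_nat_mul]; ring_nf
  have hneg : 0 ≤ (8 * t ^ 3 + 12 * t ^ 2 + 36 * t + 18) * exp (2 * t) := by positivity
  unfold R1rad
  rw [mul_pow, ← e22]
  nlinarith [mul_le_mul_of_nonneg_left e3 (by linarith : (0 : ℝ) ≤ 24 * t + 32),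
    mul_le_mul_of_nonneg_left e1 (by linarith : (0 : ℝ) ≤ 8 * t), exp_pos (4 * t)]

lemma le_R1den {t : ℝ} (ht : 3 ≤ t) : t ≤ R1den t := by
  have h1 : exp (-(2 * t)) ≤ exp (-t) := exp_le_exp.2 (by linarith)
  have h2 : exp (-t) ≤ 1 := exp_le_one_iff.2 (by linarith)
  unfold R1den
  nlinarith [exp_pos (-t)]

lemma R1_le_four_div_mul_sqrt {t : ℝ} (ht : 3 ≤ t) : R1 t ≤ 4 / (t * √t) := by
  have ht0 : 0 < t := by linarith
  have hnum : √(R1rad t) ≤ 7 * exp (2 * t) * √t := calc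
    √(R1rad t) ≤ √((7 * exp (2 * t)) ^ 2 * t) := sqrt_le_sqrt (R1rad_le_sq_mul ht)
    _ = 7 * exp (2 * t) * √t := by rw [sqrt_mul (by positivity), sqrt_sq (by positivity)]
  have hden : 2 * t * (exp (2 * t) * t) ≤ 2 * t * (exp (2 * t) * R1den t) := by
    gcongr
    exact le_R1den ht
  have hs := sq_sqrt ht0.le
  have hts : 0 < t * √t := by positivity
  rw [R1_eq]
  calc √(R1rad t) / (2 * t * (exp (2 * t) * R1den t))
      ≤ 7 * exp (2 * t) * √t / (2 * t * (exp (2 * t) * t)) :=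
        div_le_div₀ (by positivity) hnum (by positivity) hden
    _ = 7 / 2 / (t * √t) := by
      field_simp
      linear_combination hs
    _ ≤ 4 / (t * √t) := by gcongr; norm_num

lemma integrableOn_R1_Ioc : IntegrableOn R1 (Ioc 0 (1 / 4)) :=
  .of_continuousOn_of_abs_le measurableSet_Ioc
    ((intervalIntegral.intervalIntegrable_rpow' (by norm_num : (-1 : ℝ) < -(1 / 2))).1.const_mul 12)
    (continuousOn_R1.mono Ioc_subset_Ioi_self) fun t ⟨ht, ht4⟩ ↦ by
      rw [abs_of_nonneg (R1_nonneg ht), rpow_neg_one_half_eq ht.le, mul_one_div]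
      exact R1_le_twelve_div_sqrt ht ht4

lemma integrableOn_R1_Ioi : IntegrableOn R1 (Ioi 3) :=
  .of_continuousOn_of_abs_le measurableSet_Ioi
    ((integrableOn_Ioi_rpow_of_lt (by norm_num : -(3 / 2) < (-1 : ℝ)) three_pos).const_mul 4)
    (continuousOn_R1.mono (Ioi_subset_Ioi (by norm_num))) fun t (ht : 3 < t) ↦ by
      rw [abs_of_nonneg (R1_nonneg (by linarith)), rpow_neg_three_halves_eq (by linarith),
        mul_one_div]
      exact R1_le_four_div_mul_sqrt ht.le

lemma integrableOn_R1 : IntegrableOn R1 (Ioi 0) := by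
  have hIcc : IntegrableOn R1 (Icc (1 / 4) 3) :=
    (continuousOn_R1.mono fun t ht ↦ lt_of_lt_of_le (by norm_num) ht.1).integrableOn_Icc
  rw [← Ioc_union_Ioi_eq_Ioi (by norm_num : (0 : ℝ) ≤ 3),
    ← Ioc_union_Icc_eq_Ioc (by norm_num : (0 : ℝ) < 1 / 4) (by norm_num : (1 / 4 : ℝ) ≤ 3)]
  exact (integrableOn_R1_Ioc.union hIcc).union integrableOn_R1_Ioi

lemma integrableOn_one_div_eight_mul_sqrt_add_mul_sqrt :
    IntegrableOn (fun t : ℝ ↦ 1 / (8 * √t + t * √t)) (Ici 1) := by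
  rw [integrableOn_Ici_iff_integrableOn_Ioi]
  refine .of_continuousOn_of_abs_le measurableSet_Ioi
    (integrableOn_Ioi_rpow_of_lt (by norm_num : -(3 / 2) < (-1 : ℝ)) one_pos)
    (continuousOn_const.div (by fun_prop) fun t (ht : 1 < t) ↦ ?_) fun t (ht : 1 < t) ↦ ?_
  · have := sqrt_pos.2 (by linarith : (0 : ℝ) < t)
    positivity
  · have := sqrt_pos.2 (by linarith : (0 : ℝ) < t)
    rw [abs_of_nonneg (by positivity), rpow_neg_three_halves_eq (by linarith)]
    exact one_div_le_one_div_of_le (by positivity) (by linarith)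

theorem stmt18 :
    MeasureTheory.IntegrableOn
      (fun t : ℝ => R1 t -
        (if 1 ≤ t then 1 / (8 * Real.sqrt t + t * Real.sqrt t) else 0))
      (Set.Ioi 0) := by
  have hint := integrableOn_one_div_eight_mul_sqrt_add_mul_sqrt
  have hw : (fun t : ℝ ↦ if 1 ≤ t then 1 / (8 * √t + t * √t) else 0) =
      (Ici 1).indicator fun t ↦ 1 / (8 * √t + t * √t) := by
    ext t
    simp [indicator_apply]
  rw [← integrable_indicator_iff measurableSet_Ici, ← hw] at hint
  exact integrableOn_R1.sub hint.integrableOn
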